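/- For every β ∈ (0,∞) and h ∈ ℝ, the double limits P_{β,h}^{+,±}(a | ω) := lim_{n→∞} lim_{l→∞} ν_{β,h}^+( η₀ = a | η_i = ±1 for −(n+l) ≤ i ≤ −(n+1) and η_i = ω_i for −n ≤ i ≤ −1 ) exist for every past ω ∈ Ω_{<0} and every a ∈ {−1,+1}; the resulting functions P_{β,h}^{+,+} and P_{β,h}^{+,−} are g-functions which are attractive (i.e. ω ↦ P(+1|ω) is nondecreasing for the coordinatewise order on Ω_{<0}), and they satisfy P_{β,h}^{+,−}(+1 | ω) ≤ P_{β,h}^{+,+}(+1 | ω) for all ω ∈ Ω_{<0}. -/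

import Mathlib

open MeasureTheory Filter Topology ProbabilityTheory

noncomputable section

/-- Spin value of a Boolean spin: `true ↦ +1`, `false ↦ -1`. -/
def sval (b : Bool) : ℝ := if b then 1 else -1

/-- Two-dimensional spin configurations. -/
abbrev Cfg2 := ℤ × ℤ → Bool

/-- Two-sided sequences over an alphabet `A`. -/
abbrev ZSeq (A : Type*) := ℤ → A

/-- Pasts: index `k` corresponds to the coordinate `-(k+1)`. -/
abbrev Past (A : Type*) := ℕ → A

/-- The four nearest neighbours of a site of `ℤ²`. -/
def nbrs (x : ℤ × ℤ) : Finset (ℤ × ℤ) :=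
  {(x.1 + 1, x.2), (x.1 - 1, x.2), (x.1, x.2 + 1), (x.1, x.2 - 1)}

/-- Boltzmann weight
`exp(β[Σ_{{x,y}⊆Λ, x∼y} ω_x ω_y + Σ_{x∈Λ, y∉Λ, x∼y} ω_x σ_y] − h Σ_{x∈Λ} ω_x)`
(the sum over unordered pairs inside `Λ` is written as half the ordered sum). -/
def isingWeight (β h : ℝ) (Λ : Finset (ℤ × ℤ)) (σ ω : Cfg2) : ℝ :=
  Real.exp (β * ((∑ x ∈ Λ, ∑ y ∈ Λ.filter (fun y => y ∈ nbrs x),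
        sval (ω x) * sval (ω y)) / 2
      + ∑ x ∈ Λ, ∑ y ∈ (nbrs x).filter (fun y => y ∉ Λ), sval (ω x) * sval (σ y))
    - h * ∑ x ∈ Λ, sval (ω x))

/-- Fill in the values `τ` inside `Λ` and `σ` outside. -/
def fill (Λ : Finset (ℤ × ℤ)) (σ : Cfg2) (τ : ↥Λ → Bool) : Cfg2 :=
  fun x => if hx : x ∈ Λ then τ ⟨x, hx⟩ else σ x

/-- The finite-volume Ising measure in `Λ` with boundary condition `σ`, viewed as a measure on
the full configuration space, the spins outside `Λ` being frozen to `σ`. -/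
def isingFV (β h : ℝ) (Λ : Finset (ℤ × ℤ)) (σ : Cfg2) : Measure Cfg2 :=
  (∑ τ : ↥Λ → Bool, ENNReal.ofReal (isingWeight β h Λ σ (fill Λ σ τ)))⁻¹ •
    ∑ τ : ↥Λ → Bool,
      ENNReal.ofReal (isingWeight β h Λ σ (fill Λ σ τ)) • Measure.dirac (fill Λ σ τ)

/-- The box `[-n,n]²`. -/
def box (n : ℕ) : Finset (ℤ × ℤ) :=
  (Finset.Icc (-(n : ℤ)) (n : ℤ)) ×ˢ (Finset.Icc (-(n : ℤ)) (n : ℤ))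

/-- Convergence of a sequence of measures on a product space in the sense of convergence of the
measures of all finite-dimensional cylinder events; for probability measures on `{−1,+1}^ι`
this is exactly weak convergence. -/
def CylTendsto {ι A : Type*} [MeasurableSpace A] (μs : ℕ → Measure (ι → A))
    (μ : Measure (ι → A)) : Prop :=
  ∀ (s : Finset ι) (f : ι → A),
    Tendsto (fun n => μs n {η | ∀ i ∈ s, η i = f i}) atTop (𝓝 (μ {η | ∀ i ∈ s, η i = f i}))

/-- `μ` is the plus phase `μ_{β,h}^+`: the weak limit of the finite-volume Ising measures on
`[-n,n]²` with all-plus boundary conditions. -/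
def IsPlusPhase (β h : ℝ) (μ : Measure Cfg2) : Prop :=
  IsProbabilityMeasure μ ∧ CylTendsto (fun n => isingFV β h (box n) (fun _ => true)) μ

/-- `μ` is the minus phase `μ_{β,h}^-`. -/
def IsMinusPhase (β h : ℝ) (μ : Measure Cfg2) : Prop :=
  IsProbabilityMeasure μ ∧ CylTendsto (fun n => isingFV β h (box n) (fun _ => false)) μ

/-- The critical inverse temperature `β_c = ln(1+√2)/2`. -/
def betaCrit : ℝ := Real.log (1 + Real.sqrt 2) / 2

/-- Projection of a two-dimensional configuration onto the line `ℤ × {0}`. -/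
def lineProj (η : Cfg2) : ZSeq Bool := fun i => η (i, 0)

/-- The Schonmann projection of a measure on `{−1,+1}^{ℤ²}`. -/
def schonmann (μ : Measure Cfg2) : Measure (ZSeq Bool) := μ.map lineProj

/-- Restriction of a two-sided sequence to its strict past; index `k` is coordinate `-(k+1)`. -/
def restrictPast {A : Type*} (ω : ZSeq A) : Past A := fun k => ω (-(k + 1 : ℤ))

/-- The shift on two-sided sequences. -/
def shiftSeq {A : Type*} : ZSeq A → ZSeq A := fun ω i => ω (i + 1)

/-- The σ-algebra `ℱ_{<0}` generated by the coordinates of negative index. -/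
def pastSigma (A : Type*) [MeasurableSpace A] : MeasurableSpace (ZSeq A) :=
  MeasurableSpace.comap (fun ω : ZSeq A => restrictPast ω) inferInstance

/-- The σ-algebra generated by the coordinates in `S`. -/
def sigmaOn {ι A : Type*} [MeasurableSpace A] (S : Set ι) : MeasurableSpace (ι → A) :=
  MeasurableSpace.comap (fun ω : ι → A => S.restrict ω) inferInstance

/-- A g-function on the alphabet `A`: measurable, `[0,1]`-valued, normalized. -/
def IsGFunction {A : Type*} [Fintype A] [MeasurableSpace A] (P : A → Past A → ℝ) : Prop :=
  (∀ a, Measurable (P a)) ∧ ∀ ω, (∑ a : A, P a ω) = 1 ∧ ∀ a, P a ω ∈ Set.Icc (0 : ℝ) 1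

/-- `μ` is a translation-invariant g-measure consistent with the g-function `P`: for each `a`,
`ω ↦ P a (restrictPast ω)` is a version of the conditional probability `μ(X₀ = a | ℱ_{<0})`. -/
def IsGMeasure {A : Type*} [MeasurableSpace A] (μ : Measure (ZSeq A))
    (P : A → Past A → ℝ) : Prop :=
  IsProbabilityMeasure μ ∧ μ.map shiftSeq = μ ∧
    ∀ a : A, (fun ω => P a (restrictPast ω))
      =ᵐ[μ] μ[Set.indicator {ω : ZSeq A | ω 0 = a} (fun _ => (1 : ℝ)) | pastSigma A]

/-- The `k`-th variation of a g-function: the supremum of `|P a ω − P a σ|` over pasts agreeing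
on the coordinates `−k,…,−1`. -/
def varG {A : Type*} (P : A → Past A → ℝ) (k : ℕ) : ℝ :=
  sSup {d : ℝ | ∃ (a : A) (ω σ' : Past A), (∀ j < k, ω j = σ' j) ∧ d = |P a ω - P a σ'|}

/-- Elementary conditional probability `μ(B | A)`, as a real number. -/
def condProbR {X : Type*} [MeasurableSpace X] (μ : Measure X) (B A : Set X) : ℝ :=
  ((μ[|A]) B).toReal

/-- The event that `η_i = ω` (suitably reindexed) for `−n ≤ i ≤ −1` and `η_i = b`
for `−(n+l) ≤ i ≤ −(n+1)`. -/
def pastEvt (n l : ℕ) (b : Bool) (ω : Past Bool) : Set (ZSeq Bool) :=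
  {η | (∀ i : ℤ, -(n : ℤ) ≤ i → i ≤ -1 → η i = ω (i.natAbs - 1)) ∧
       (∀ i : ℤ, -((n : ℤ) + l) ≤ i → i ≤ -((n : ℤ) + 1) → η i = b)}

/-- The event that `η_i = b` for `−(n+l) ≤ i ≤ −n`. -/
def blockEvt (n l : ℕ) (b : Bool) : Set (ZSeq Bool) :=
  {η | ∀ i : ℤ, -((n : ℤ) + l) ≤ i → i ≤ -(n : ℤ) → η i = b}

/-- The event that `η_i = b` for `−n ≤ i ≤ −1`. -/
def allBlock (n : ℕ) (b : Bool) : Set (ZSeq Bool) :=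
  {η | ∀ i : ℤ, -(n : ℤ) ≤ i → i ≤ -1 → η i = b}

/-- `P` is the g-function `P^{+,b}` obtained from `ν` by conditioning on the symbol `b`
in the far past: `P(a|ω) = lim_n lim_l ν(η₀ = a | η = b on [−(n+l),−(n+1)], η = ω on [−n,−1])`,
both iterated limits being required to exist. -/
def IsCondG (ν : Measure (ZSeq Bool)) (b : Bool) (P : Bool → Past Bool → ℝ) : Prop :=
  ∀ (a : Bool) (ω : Past Bool), ∃ L : ℕ → ℝ,
    (∀ n, Tendsto (fun l => condProbR ν {η | η 0 = a} (pastEvt n l b ω)) atTop (𝓝 (L n))) ∧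
    Tendsto L atTop (𝓝 (P a ω))

/-- `ν'` is the iterated weak limit `lim_n lim_l ν( · | η = b on [−(n+l),−n])`. -/
def IsCondLimitMeasure (ν : Measure (ZSeq Bool)) (b : Bool) (ν' : Measure (ZSeq Bool)) : Prop :=
  ∃ νseq : ℕ → Measure (ZSeq Bool),
    (∀ n, CylTendsto (fun l => ν[|blockEvt n l b]) (νseq n)) ∧ CylTendsto νseq ν'

/-- Stochastic domination: `ν ≤ μ` iff `ν B ≤ μ B` for every increasing measurable event `B`. -/
def StochDom {A : Type*} [MeasurableSpace A] [Preorder A]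
    (ν μ : Measure (ZSeq A)) : Prop :=
  ∀ B : Set (ZSeq A), MeasurableSet B → (∀ ⦃x y : ZSeq A⦄, x ≤ y → x ∈ B → y ∈ B) → ν B ≤ μ B

/-- `π` is the i.i.d. product measure with `π(η_i = +1) = ρ` for each coordinate. -/
def IsBernoulliProd (ρ : ℝ) (π : Measure (ZSeq Bool)) : Prop :=
  IsProbabilityMeasure π ∧ ∀ (s : Finset ℤ) (f : ℤ → Bool),
    π {η | ∀ i ∈ s, η i = f i} = ∏ i ∈ s, ENNReal.ofReal (if f i then ρ else 1 - ρ)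

/-- Splicing of pasts: coordinates `−k,…,−1` (indices `< k`) from `ω`, the rest from `σ`. -/
def splice {A : Type*} (σ ω : Past A) (k : ℕ) : Past A := fun j => if j < k then ω j else σ j

/-- `ν'` is an extreme point of the convex set of g-measures consistent with `P`. -/
def ExtremeGMeasure (ν' : Measure (ZSeq Bool)) (P : Bool → Past Bool → ℝ) : Prop :=
  IsGMeasure ν' P ∧
  ∀ ν₁ ν₂ : Measure (ZSeq Bool), IsGMeasure ν₁ P → IsGMeasure ν₂ P →
    ∀ t : ℝ, t ∈ Set.Ioo (0 : ℝ) 1 →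
      ν' = ENNReal.ofReal t • ν₁ + ENNReal.ofReal (1 - t) • ν₂ → ν₁ = ν' ∧ ν₂ = ν'

/-- The event that the spins on the line are `−1` on `{−m,…,−n} × {0}`. -/
def lineMinusEvt (n m : ℕ) : Set Cfg2 :=
  {η | ∀ i : ℤ, -(m : ℤ) ≤ i → i ≤ -(n : ℤ) → η (i, 0) = false}

/-- Nearest-neighbour adjacency in `ℤ²` (`‖x−y‖₁ = 1`). -/
def adj2 (x y : ℤ × ℤ) : Prop := (x.1 - y.1).natAbs + (x.2 - y.2).natAbs = 1

/-- The event `A_n`: there is an infinite nearest-neighbour path of `+1` spins starting at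
`(n,0)` entirely contained in the half-plane `{x ≤ n}`. -/
def plusPathEvt (n : ℕ) : Set Cfg2 :=
  {η | ∃ γ : ℕ → ℤ × ℤ, γ 0 = ((n : ℤ), 0) ∧ (∀ j, adj2 (γ j) (γ (j + 1))) ∧
    Function.Injective γ ∧ (∀ j, (γ j).1 ≤ (n : ℤ)) ∧ ∀ j, η (γ j) = true}

/-- The block map for the decimation `ν_{l,k}`: the `j`-th letter consists of the spins on
`[j(k+l), j(k+l)+l−1]`. -/
def blockMap (l k : ℕ) (η : ZSeq Bool) : ZSeq (Fin l → Bool) :=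
  fun j r => η (j * ((k : ℤ) + l) + r)

end

/-!
For `β ≥ 0` the finite-volume Ising weights satisfy the FKG lattice condition, and flipping a
single spin changes a weight by at most the factor `exp (28 |β| + 2 |h|)` (finite energy). Both
properties pass to the plus phase on cylinder events and then to its Schonmann projection `ν`:
every cylinder event has positive `ν`-probability, and `ν(η₀ = +1 | η = ξ on a finite window)`
is increasing in `ξ`.

Conditioning on one more spin equal to `b` therefore increases `ν(η₀ = b | ·)`; so
`u n l := ν(η₀ = b | pastEvt n l b ω)` increases in `l`, and `u (n + 1) l ≤ u n (l + 1)` because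
the two events differ only at `-(n + 1)`, where the second one imposes `b`. Hence `lim_l u n l` is
a supremum, antitone in `n`, and `lim_n` is an infimum. Monotonicity in the conditioning
configuration survives both limits, which gives attractiveness and `P^{+,-} ≤ P^{+,+}`.
-/

open MeasureTheory Filter Topology ProbabilityTheory Function

lemma abs_sum_sub_sum_le_mul_card {α : Type*} [DecidableEq α] {s t : Finset α} {u v : α → ℝ}
    {c : ℝ} (hc : 0 ≤ c) (huv : ∀ i ∈ s, |u i - v i| ≤ c) (ht : ∀ i ∈ s, u i ≠ v i → i ∈ t) :
    |∑ i ∈ s, u i - ∑ i ∈ s, v i| ≤ c * t.card := by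
  rw [← Finset.sum_sub_distrib,
    ← Finset.sum_filter_of_ne (p := (· ∈ t)) fun i hi h => ht i hi (sub_ne_zero.mp h)]
  calc _ ≤ ∑ i ∈ s.filter (· ∈ t), |u i - v i| := Finset.abs_sum_le_sum_abs _ _
    _ ≤ (s.filter (· ∈ t)).card • c :=
        Finset.sum_le_card_nsmul _ _ _ fun i hi => huv i (Finset.mem_filter.mp hi).1
    _ ≤ c * t.card := by
        rw [nsmul_eq_mul, mul_comm]
        gcongr
        exact fun i hi => (Finset.mem_filter.mp hi).2

lemma DependsOn.measurable {ι A β : Type*} [MeasurableSpace A] [Countable A]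
    [MeasurableSingletonClass A] [MeasurableSpace β] [Nonempty β] {s : Finset ι}
    {F : (ι → A) → β} (hF : DependsOn F (s : Set ι)) : Measurable F := by
  obtain ⟨g, rfl⟩ := dependsOn_iff_exists_comp.mp hF
  exact (measurable_of_countable g).comp (Set.measurable_restrict _)

lemma tendsto_iSup_and_tendsto_iInf_iSup {u : ℕ → ℕ → ℝ} {a b : ℝ}
    (hu : ∀ n l, u n l ∈ Set.Icc a b) (hmono : ∀ n, Monotone (u n))
    (hcross : ∀ n l, u (n + 1) l ≤ u n (l + 1)) :
    (∀ n, Tendsto (u n) atTop (𝓝 (⨆ l, u n l)))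
      ∧ Tendsto (fun n => ⨆ l, u n l) atTop (𝓝 (⨅ n, ⨆ l, u n l)) := by
  have hbdd : ∀ n, BddAbove (Set.range (u n)) := fun n => ⟨b, by
    rintro _ ⟨l, rfl⟩
    exact (hu n l).2⟩
  refine ⟨fun n => tendsto_atTop_ciSup (hmono n) (hbdd n), tendsto_atTop_ciInf ?_ ⟨a, ?_⟩⟩
  · exact antitone_nat_of_succ_le fun n =>
      ciSup_le fun l => (hcross n l).trans (le_ciSup (hbdd n) _)
  · rintro _ ⟨n, rfl⟩
    exact (hu n 0).1.trans (le_ciSup (hbdd n) 0)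

section Cylinders

variable {ι A : Type*}

def cyl (s : Finset ι) (f : ι → A) : Set (ι → A) := {η | ∀ i ∈ s, η i = f i}

lemma measurableSet_cyl [MeasurableSpace A] [MeasurableSingletonClass A] (s : Finset ι)
    (f : ι → A) : MeasurableSet (cyl s f) := by
  simp only [cyl, Set.ofPred_forall]
  exact .biInter s.countable_toSet fun i _ => measurable_pi_apply i (measurableSet_singleton _)

lemma measurableSet_eval_eq [MeasurableSpace A] [MeasurableSingletonClass A] (j : ι) (a : A) :
    MeasurableSet {η : ι → A | η j = a} :=
  show MeasurableSet ((fun η : ι → A => η j) ⁻¹' {a}) from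
    measurable_pi_apply j (measurableSet_singleton a)

lemma cyl_congr {s : Finset ι} {f g : ι → A} (h : ∀ i ∈ s, f i = g i) : cyl s f = cyl s g := by
  ext η
  exact forall₂_congr fun i hi => by rw [h i hi]

lemma inf_mem_cyl [SemilatticeInf A] {s : Finset ι} {f η₁ η₂ : ι → A} (h₁ : η₁ ∈ cyl s f)
    (h₂ : η₂ ∈ cyl s f) : η₁ ⊓ η₂ ∈ cyl s f := fun i hi => by
  rw [Pi.inf_apply, h₁ i hi, h₂ i hi, inf_idem]

lemma sup_mem_cyl [SemilatticeSup A] {s : Finset ι} {f η₁ η₂ : ι → A} (h₁ : η₁ ∈ cyl s f)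
    (h₂ : η₂ ∈ cyl s f) : η₁ ⊔ η₂ ∈ cyl s f := fun i hi => by
  rw [Pi.sup_apply, h₁ i hi, h₂ i hi, sup_idem]

variable [DecidableEq ι]

lemma update_mem_cyl_iff {s : Finset ι} {j : ι} (hj : j ∉ s) (f η : ι → A) (a : A) :
    update η j a ∈ cyl s f ↔ η ∈ cyl s f :=
  forall₂_congr fun i hi => by rw [update_of_ne (ne_of_mem_of_not_mem hi hj)]

lemma cyl_insert (j : ι) (s : Finset ι) (f : ι → A) :
    cyl (insert j s) f = cyl s f ∩ {η | η j = f j} := by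
  ext η
  simp only [cyl, Finset.forall_mem_insert, Set.mem_inter_iff, Set.mem_ofPred_eq, and_comm]

lemma cyl_insert_update {j : ι} {s : Finset ι} (hj : j ∉ s) (f : ι → A) (a : A) :
    cyl (insert j s) (update f j a) = cyl s f ∩ {η | η j = a} := by
  rw [cyl_insert, update_self,
    cyl_congr fun i hi => update_of_ne (ne_of_mem_of_not_mem hi hj) a f]

lemma cyl_eq_cyl_erase_inter {j : ι} {s : Finset ι} (hj : j ∈ s) (f : ι → A) :
    cyl s f = cyl (s.erase j) f ∩ {η | η j = f j} := by
  rw [← cyl_insert, Finset.insert_erase hj]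

end Cylinders

lemma le_of_dependsOn_of_update_le {ι β : Type*} [DecidableEq ι] [Preorder β] {s : Finset ι}
    {F : (ι → Bool) → β} (hF : DependsOn F (s : Set ι))
    (hmono : ∀ x, ∀ j ∈ s, F (update x j false) ≤ F (update x j true))
    {x y : ι → Bool} (hxy : ∀ i ∈ s, x i ≤ y i) : F x ≤ F y := by
  induction s using Finset.induction_on generalizing F with
  | empty => exact (hF fun i hi => absurd hi (Finset.notMem_empty i)).le
  | @insert j t hj ih =>
    have hstep : F x ≤ F (update x j (y j)) := by
      by_cases hxj : x j = y j
      · rw [← hxj, update_eq_self]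
      · obtain ⟨hx, hy⟩ : x j = false ∧ y j = true := by
          have := hxy j (Finset.mem_insert_self j t)
          revert hxj this; cases x j <;> cases y j <;> decide
        conv_lhs => rw [← update_eq_self j x, hx]
        rw [hy]
        exact hmono x j (Finset.mem_insert_self j t)
    refine hstep.trans ?_
    conv_rhs => rw [← update_eq_self j y]
    refine ih (F := fun z => F (update z j (y j))) (fun z z' hzz' => hF fun i hi => ?_)
      (fun z k hk => ?_) fun i hi => hxy i (Finset.mem_insert_of_mem hi)
    · by_cases hij : i = j
      · subst hij; simp
      · simp only [update_of_ne hij]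
        exact hzz' i ((Finset.mem_insert.mp hi).resolve_left hij)
    · have hkj : k ≠ j := ne_of_mem_of_not_mem hk hj
      simp only [update_comm hkj]
      exact hmono _ k (Finset.mem_insert_of_mem hk)

section CylinderProperties

variable {ι : Type*}

def CylPositive (ν : Measure (ι → Bool)) : Prop := ∀ s f, 0 < ν.real (cyl s f)

def CylFKG (ν : Measure (ι → Bool)) : Prop :=
  ∀ (s : Finset ι) (f : ι → Bool) (p q : ι), p ∉ s → q ∉ s → p ≠ q →
    ν.real (cyl s f ∩ {η | η p = true}) * ν.real (cyl s f ∩ {η | η q = true})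
      ≤ ν.real (cyl s f) * ν.real (cyl s f ∩ {η | η p = true} ∩ {η | η q = true})

lemma CylTendsto.tendsto_real {A : Type*} [MeasurableSpace A] {μs : ℕ → Measure (ι → A)}
    {μ : Measure (ι → A)} [IsFiniteMeasure μ] (h : CylTendsto μs μ) (s : Finset ι)
    (f : ι → A) : Tendsto (fun n => (μs n).real (cyl s f)) atTop (𝓝 (μ.real (cyl s f))) :=
  (ENNReal.tendsto_toReal (measure_ne_top _ _)).comp (h s f)

lemma CylPositive.of_cylTendsto {μs : ℕ → Measure (ι → Bool)} {μ : Measure (ι → Bool)}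
    [IsFiniteMeasure μ] (h : CylTendsto μs μ)
    (hpos : ∀ s f, ∃ c > 0, ∀ᶠ n in atTop, c ≤ (μs n).real (cyl s f)) : CylPositive μ :=
  fun s f =>
    let ⟨_, hc, hev⟩ := hpos s f
    hc.trans_le (ge_of_tendsto (h.tendsto_real s f) hev)

section Restriction

variable {κ : Type*} {e : ι → κ}

lemma measurable_comp_right : Measurable fun η : κ → Bool => η ∘ e :=
  measurable_pi_lambda _ fun i => measurable_pi_apply (e i)

lemma preimage_comp_cyl (he : Injective e) (s : Finset ι) (f : ι → Bool) :
    (fun η : κ → Bool => η ∘ e) ⁻¹' cyl s f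
      = cyl (s.map ⟨e, he⟩) (extend e f fun _ => false) := by
  ext η
  simp [cyl, he.extend_apply]

lemma CylPositive.map_comp {ν : Measure (κ → Bool)} (hν : CylPositive ν) (he : Injective e) :
    CylPositive (ν.map (· ∘ e)) := fun s f => by
  rw [map_measureReal_apply measurable_comp_right (measurableSet_cyl s f),
    preimage_comp_cyl he]
  exact hν _ _

lemma CylFKG.map_comp {ν : Measure (κ → Bool)} (hν : CylFKG ν)
    (he : Injective e) : CylFKG (ν.map (· ∘ e)) := by
  intro s f p q hp' hq hpq
  have hC := measurableSet_cyl (A := Bool) s f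
  have hp := hC.inter (measurableSet_eval_eq (A := Bool) p true)
  simp only [map_measureReal_apply measurable_comp_right hC,
    map_measureReal_apply measurable_comp_right hp,
    map_measureReal_apply measurable_comp_right (hC.inter (measurableSet_eval_eq q true)),
    map_measureReal_apply measurable_comp_right (hp.inter (measurableSet_eval_eq q true)),
    Set.preimage_inter, preimage_comp_cyl he]
  exact hν _ _ (e p) (e q) (by simpa using hp') (by simpa using hq) (he.ne hpq)

end Restriction

variable [DecidableEq ι]

lemma CylFKG.of_cylTendsto {μs : ℕ → Measure (ι → Bool)} {μ : Measure (ι → Bool)}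
    [IsFiniteMeasure μ] (h : CylTendsto μs μ) (hμs : ∀ n, CylFKG (μs n)) : CylFKG μ := by
  intro s f p q hp hq hpq
  have hq' : q ∉ insert p s := by simp [hq, Ne.symm hpq]
  have hcyl : ∀ ν : Measure (ι → Bool), CylFKG ν →
      ν.real (cyl (insert p s) (update f p true)) * ν.real (cyl (insert q s) (update f q true))
        ≤ ν.real (cyl s f) * ν.real (cyl (insert q (insert p s))
          (update (update f p true) q true)) := by
    intro ν hν
    rw [cyl_insert_update hq', cyl_insert_update hp, cyl_insert_update hq]
    exact hν s f p q hp hq hpq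
  rw [← cyl_insert_update hp, ← cyl_insert_update hq, ← cyl_insert_update hq']
  exact le_of_tendsto_of_tendsto' ((h.tendsto_real _ _).mul (h.tendsto_real _ _))
    ((h.tendsto_real _ _).mul (h.tendsto_real _ _)) fun n => hcyl _ (hμs n)

end CylinderProperties

section ConditionalProbability

variable {X : Type*} [MeasurableSpace X] (ν : Measure X)

lemma condProbR_eq_div {A : Set X} (hA : MeasurableSet A) (B : Set X) :
    condProbR ν B A = ν.real (A ∩ B) / ν.real A := by
  rw [condProbR, cond_apply hA, ENNReal.toReal_mul, ENNReal.toReal_inv, div_eq_inv_mul]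
  rfl

lemma condProbR_mem_Icc (B A : Set X) : condProbR ν B A ∈ Set.Icc (0 : ℝ) 1 :=
  ⟨ENNReal.toReal_nonneg, measureReal_le_one⟩

variable [IsFiniteMeasure ν]

lemma condProbR_compl {A B : Set X} (hA : ν A ≠ 0) (hB : MeasurableSet B) :
    condProbR ν Bᶜ A = 1 - condProbR ν B A := by
  have := cond_isProbabilityMeasure_of_finite hA (measure_ne_top ν A)
  exact probReal_compl_eq_one_sub hB

lemma measureReal_inter_le_of_condProbR_le {A B : Set X} {c : ℝ} (hA : MeasurableSet A)
    (h : condProbR ν B A ≤ c) : ν.real (A ∩ B) ≤ c * ν.real A := by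
  rw [condProbR_eq_div ν hA] at h
  rcases (measureReal_nonneg (μ := ν) (s := A)).eq_or_lt with h0 | h0
  · rw [← h0, mul_zero]
    exact (measureReal_mono Set.inter_subset_left).trans h0.ge
  · exact (div_le_iff₀ h0).mp h

lemma condProbR_union_le {A₁ A₂ B : Set X} (hA₁ : MeasurableSet A₁) (hA₂ : MeasurableSet A₂)
    (hB : MeasurableSet B) (hd : Disjoint A₁ A₂) {c : ℝ} (h₁ : condProbR ν B A₁ ≤ c) (h₂ : condProbR ν B A₂ ≤ c) :
    condProbR ν B (A₁ ∪ A₂) ≤ c := by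
  have hc : 0 ≤ c := (condProbR_mem_Icc ν B A₁).1.trans h₁
  rw [condProbR_eq_div ν (hA₁.union hA₂), Set.union_inter_distrib_right,
    measureReal_union (hd.mono Set.inter_subset_left Set.inter_subset_left)
      (hA₂.inter hB), measureReal_union hd hA₂]
  refine div_le_of_le_mul₀ (by positivity) hc ?_
  rw [mul_add]
  exact add_le_add (measureReal_inter_le_of_condProbR_le ν hA₁ h₁)
    (measureReal_inter_le_of_condProbR_le ν hA₂ h₂)

end ConditionalProbability

section FKGConsequences

variable {ι : Type*} {ν : Measure (ι → Bool)}

lemma setOf_eval_eq_not (j : ι) (a : Bool) : {η : ι → Bool | η j = !a} = {η | η j = a}ᶜ := by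
  ext η
  cases η j <;> cases a <;> simp

lemma measureReal_eq_inter_add_inter_not [IsFiniteMeasure ν] (E : Set (ι → Bool)) (j : ι)
    (b : Bool) : ν.real E = ν.real (E ∩ {η | η j = b}) + ν.real (E ∩ {η | η j = !b}) := by
  rw [setOf_eval_eq_not, ← Set.sdiff_eq]
  exact (measureReal_inter_add_sdiff (measurableSet_eval_eq j b)).symm

variable [DecidableEq ι]

lemma CylPositive.inter (hpos : CylPositive ν) {s : Finset ι} {j : ι} (hj : j ∉ s)
    (f : ι → Bool) (b : Bool) : 0 < ν.real (cyl s f ∩ {η | η j = b}) := by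
  rw [← cyl_insert_update hj]
  exact hpos _ _

variable [IsFiniteMeasure ν] (hpos : CylPositive ν) (hfkg : CylFKG ν)
include hpos hfkg

lemma condProbR_inter_false_le_inter_true {s : Finset ι} {o j : ι} (ho : o ∉ s) (hj : j ∉ s)
    (hjo : j ≠ o) (f : ι → Bool) :
    condProbR ν {η | η o = true} (cyl s f ∩ {η | η j = false})
      ≤ condProbR ν {η | η o = true} (cyl s f ∩ {η | η j = true}) := by
  have hC := measurableSet_cyl (A := Bool) s f
  rw [condProbR_eq_div ν (hC.inter (measurableSet_eval_eq j _)),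
    condProbR_eq_div ν (hC.inter (measurableSet_eval_eq j _)),
    div_le_div_iff₀ (hpos.inter hj f false) (hpos.inter hj f true),
    Set.inter_right_comm (cyl s f) {η : ι → Bool | η j = false},
    Set.inter_right_comm (cyl s f) {η : ι → Bool | η j = true}]
  have h := hfkg s f o j ho hj hjo.symm
  rw [measureReal_eq_inter_add_inter_not (cyl s f) j true,
    measureReal_eq_inter_add_inter_not (cyl s f ∩ {η | η o = true}) j true, Bool.not_true] at h
  nlinarith

lemma condProbR_inter_le_inter_eq {s : Finset ι} {o j : ι} (ho : o ∉ s) (hj : j ∉ s)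
    (hjo : j ≠ o) (f : ι → Bool) (a x : Bool) :
    condProbR ν {η | η o = a} (cyl s f ∩ {η | η j = x})
      ≤ condProbR ν {η | η o = a} (cyl s f ∩ {η | η j = a}) := by
  have key := condProbR_inter_false_le_inter_true hpos hfkg ho hj hjo f
  have hne : ∀ b, ν (cyl s f ∩ {η | η j = b}) ≠ 0 := fun b h0 =>
    (hpos.inter hj f b).ne' (by simp [measureReal_def, h0])
  cases a <;> cases x
  · exact le_rfl
  · rw [show {η : ι → Bool | η o = false} = {η | η o = true}ᶜ from setOf_eval_eq_not o true,
      condProbR_compl ν (hne _) (measurableSet_eval_eq o _),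
      condProbR_compl ν (hne _) (measurableSet_eval_eq o _)]
    linarith
  · exact key
  · exact le_rfl

lemma condProbR_le_inter_eq {s : Finset ι} {o j : ι} (ho : o ∉ s) (hj : j ∉ s) (hjo : j ≠ o)
    (f : ι → Bool) (a : Bool) :
    condProbR ν {η | η o = a} (cyl s f)
      ≤ condProbR ν {η | η o = a} (cyl s f ∩ {η | η j = a}) := by
  have hE : ∀ b, MeasurableSet (cyl s f ∩ {η | η j = b}) := fun b =>
    (measurableSet_cyl s f).inter (measurableSet_eval_eq j b)
  have hsplit : cyl s f = (cyl s f ∩ {η | η j = a}) ∪ (cyl s f ∩ {η | η j = !a}) := by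
    rw [← Set.inter_union_distrib_left, setOf_eval_eq_not, Set.union_compl_self, Set.inter_univ]
  conv_lhs => rw [hsplit]
  refine condProbR_union_le ν (hE a) (hE !a) (measurableSet_eval_eq o a) ?_ le_rfl
    (condProbR_inter_le_inter_eq hpos hfkg ho hj hjo f a !a)
  rw [setOf_eval_eq_not]
  exact disjoint_compl_right.mono Set.inter_subset_right Set.inter_subset_right

lemma condProbR_cyl_le_of_eq_of_ne {s : Finset ι} {o j : ι} (ho : o ∉ s) (hj : j ∈ s)
    {f g : ι → Bool} (hfg : ∀ i ∈ s, i ≠ j → f i = g i) :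
    condProbR ν {η | η o = g j} (cyl s f) ≤ condProbR ν {η | η o = g j} (cyl s g) := by
  rw [cyl_eq_cyl_erase_inter hj f, cyl_eq_cyl_erase_inter hj g,
    cyl_congr fun i hi => hfg i (Finset.mem_of_mem_erase hi) (Finset.ne_of_mem_erase hi)]
  exact condProbR_inter_le_inter_eq hpos hfkg (fun h => ho (Finset.mem_of_mem_erase h))
    (Finset.notMem_erase j s) (ne_of_mem_of_not_mem hj ho) g (g j) (f j)

lemma condProbR_cyl_mono {s : Finset ι} {o : ι} (ho : o ∉ s) {f g : ι → Bool}
    (hfg : ∀ i ∈ s, f i ≤ g i) :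
    condProbR ν {η | η o = true} (cyl s f) ≤ condProbR ν {η | η o = true} (cyl s g) :=
  le_of_dependsOn_of_update_le (F := fun x => condProbR ν {η | η o = true} (cyl s x))
    (fun x y hxy => by simp only [cyl_congr hxy])
    (fun x j hj => by
      simpa using condProbR_cyl_le_of_eq_of_ne hpos hfkg ho hj (f := update x j false)
        (g := update x j true) fun i _ hij => by simp [update_of_ne hij])
    hfg

end FKGConsequences

lemma pow_mul_measureReal_univ_le_cyl {ι : Type*} [DecidableEq ι] {ν : Measure (ι → Bool)}
    [IsFiniteMeasure ν] {Λ : Finset ι} {c : ℝ} (hc : 0 ≤ c)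
    (hflip : ∀ (s : Finset ι) (f : ι → Bool), ∀ j ∈ Λ, j ∉ s → ∀ v : Bool,
      ν.real (cyl s f ∩ {η | η j = !v}) ≤ c * ν.real (cyl s f ∩ {η | η j = v}))
    {s : Finset ι} (hs : s ⊆ Λ) (f : ι → Bool) :
    (1 + c)⁻¹ ^ s.card * ν.real Set.univ ≤ ν.real (cyl s f) := by
  induction s using Finset.induction_on with
  | empty => simp [cyl]
  | @insert j s hj ih =>
    have hΛ := Finset.insert_subset_iff.mp hs
    have hsplit := measureReal_eq_inter_add_inter_not (ν := ν) (cyl s f) j (f j)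
    have hle := hflip s f j hΛ.1 hj (f j)
    rw [cyl_insert, Finset.card_insert_of_notMem hj, pow_succ, mul_right_comm,
      mul_inv_le_iff₀ (by positivity)]
    nlinarith [ih hΛ.2]

section IsingEnergy

lemma sval_inf_add_sval_sup (a b : Bool) : sval (a ⊓ b) + sval (a ⊔ b) = sval a + sval b := by
  cases a <;> cases b <;> norm_num [sval]

lemma sval_mul_add_sval_mul_le (a b c d : Bool) :
    sval a * sval c + sval b * sval d
      ≤ sval (a ⊓ b) * sval (c ⊓ d) + sval (a ⊔ b) * sval (c ⊔ d) := by
  cases a <;> cases b <;> cases c <;> cases d <;> norm_num [sval]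

lemma abs_sval_sub_sval_le (a b : Bool) : |sval a - sval b| ≤ 2 := by
  cases a <;> cases b <;> norm_num [sval]

lemma abs_sval_mul_sub_sval_mul_le (a b c d : Bool) : |sval a * sval b - sval c * sval d| ≤ 2 := by
  cases a <;> cases b <;> cases c <;> cases d <;> norm_num [sval]

lemma mem_nbrs_comm {x y : ℤ × ℤ} : y ∈ nbrs x ↔ x ∈ nbrs y := by
  simp only [nbrs, Finset.mem_insert, Finset.mem_singleton, Prod.ext_iff]
  omega

lemma card_nbrs_le (x : ℤ × ℤ) : (nbrs x).card ≤ 4 := Finset.card_le_four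

variable (Λ : Finset (ℤ × ℤ)) (σ : Cfg2)

def pairSum (ω : Cfg2) : ℝ :=
  ∑ x ∈ Λ, ∑ y ∈ Λ.filter (fun y => y ∈ nbrs x), sval (ω x) * sval (ω y)

def boundarySum (ω : Cfg2) : ℝ :=
  ∑ x ∈ Λ, ∑ y ∈ (nbrs x).filter (fun y => y ∉ Λ), sval (ω x) * sval (σ y)

def spinSum (ω : Cfg2) : ℝ := ∑ x ∈ Λ, sval (ω x)

lemma isingWeight_eq (β h : ℝ) (ω : Cfg2) :
    isingWeight β h Λ σ ω
      = Real.exp (β * (pairSum Λ ω / 2 + boundarySum Λ σ ω) - h * spinSum Λ ω) := rfl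

lemma pairSum_add_le (ω₁ ω₂ : Cfg2) :
    pairSum Λ ω₁ + pairSum Λ ω₂ ≤ pairSum Λ (ω₁ ⊓ ω₂) + pairSum Λ (ω₁ ⊔ ω₂) := by
  simp only [pairSum, ← Finset.sum_add_distrib]
  exact Finset.sum_le_sum fun x _ => Finset.sum_le_sum fun y _ =>
    sval_mul_add_sval_mul_le (ω₁ x) (ω₂ x) (ω₁ y) (ω₂ y)

lemma boundarySum_inf_add_sup (ω₁ ω₂ : Cfg2) :
    boundarySum Λ σ (ω₁ ⊓ ω₂) + boundarySum Λ σ (ω₁ ⊔ ω₂)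
      = boundarySum Λ σ ω₁ + boundarySum Λ σ ω₂ := by
  simp only [boundarySum, ← Finset.sum_add_distrib, Pi.inf_apply, Pi.sup_apply, ← add_mul,
    sval_inf_add_sval_sup]

lemma spinSum_inf_add_sup (ω₁ ω₂ : Cfg2) :
    spinSum Λ (ω₁ ⊓ ω₂) + spinSum Λ (ω₁ ⊔ ω₂) = spinSum Λ ω₁ + spinSum Λ ω₂ := by
  simp only [spinSum, ← Finset.sum_add_distrib, Pi.inf_apply, Pi.sup_apply, sval_inf_add_sval_sup]

lemma isingWeight_mul_le {β : ℝ} (hβ : 0 ≤ β) (h : ℝ) (ω₁ ω₂ : Cfg2) :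
    isingWeight β h Λ σ ω₁ * isingWeight β h Λ σ ω₂
      ≤ isingWeight β h Λ σ (ω₁ ⊓ ω₂) * isingWeight β h Λ σ (ω₁ ⊔ ω₂) := by
  simp only [isingWeight_eq, ← Real.exp_add, Real.exp_le_exp]
  have hpair := mul_le_mul_of_nonneg_left (pairSum_add_le Λ ω₁ ω₂) hβ
  have hbdry := boundarySum_inf_add_sup Λ σ ω₁ ω₂
  have hspin := spinSum_inf_add_sup Λ ω₁ ω₂
  linear_combination hpair / 2 - β * hbdry + h * hspin

variable (x₀ : ℤ × ℤ) (v : Bool)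

lemma abs_sum_nbrs_sub_le {x : ℤ × ℤ} {T : Finset (ℤ × ℤ)} (hT : T ⊆ nbrs x) {u w : ℤ × ℤ → ℝ}
    (huw : ∀ y ∈ T, |u y - w y| ≤ 2) : |∑ y ∈ T, u y - ∑ y ∈ T, w y| ≤ 8 := by
  have hcard : (T.card : ℝ) ≤ 4 := by exact_mod_cast (Finset.card_le_card hT).trans (card_nbrs_le x)
  calc _ ≤ 2 * (T.card : ℝ) := abs_sum_sub_sum_le_mul_card (by norm_num) huw fun y hy _ => hy
    _ ≤ 8 := by linarith

lemma abs_spinSum_update_sub_le (ω : Cfg2) :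
    |spinSum Λ (update ω x₀ v) - spinSum Λ ω| ≤ 2 := by
  have := abs_sum_sub_sum_le_mul_card (s := Λ) (t := {x₀}) (c := 2) (by norm_num)
    (fun x _ => abs_sval_sub_sval_le _ _)
    (u := fun x => sval (update ω x₀ v x)) (v := fun x => sval (ω x))
    fun x _ hx => Finset.mem_singleton.mpr (by_contra fun hne => hx (by simp [update_of_ne hne]))
  simpa [spinSum] using this

lemma abs_boundarySum_update_sub_le (ω : Cfg2) :
    |boundarySum Λ σ (update ω x₀ v) - boundarySum Λ σ ω| ≤ 8 := by
  have := abs_sum_sub_sum_le_mul_card (s := Λ) (t := {x₀}) (c := 8) (by norm_num)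
    (fun x _ => abs_sum_nbrs_sub_le (Finset.filter_subset _ _)
      fun y _ => abs_sval_mul_sub_sval_mul_le _ _ _ _)
    (u := fun x => ∑ y ∈ (nbrs x).filter (fun y => y ∉ Λ), sval (update ω x₀ v x) * sval (σ y))
    (v := fun x => ∑ y ∈ (nbrs x).filter (fun y => y ∉ Λ), sval (ω x) * sval (σ y))
    fun x _ hx => Finset.mem_singleton.mpr (by_contra fun hne => hx (by simp [update_of_ne hne]))
  simpa [boundarySum] using this

lemma abs_pairSum_update_sub_le (ω : Cfg2) :
    |pairSum Λ (update ω x₀ v) - pairSum Λ ω| ≤ 40 := by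
  have hcard : ((insert x₀ (nbrs x₀)).card : ℝ) ≤ 5 := by
    exact_mod_cast (Finset.card_insert_le _ _).trans (Nat.succ_le_succ (card_nbrs_le x₀))
  have := abs_sum_sub_sum_le_mul_card (s := Λ) (t := insert x₀ (nbrs x₀)) (c := 8) (by norm_num)
    (fun x _ => abs_sum_nbrs_sub_le (fun y hy => (Finset.mem_filter.mp hy).2)
      fun y _ => abs_sval_mul_sub_sval_mul_le _ _ _ _)
    (u := fun x => ∑ y ∈ Λ.filter (fun y => y ∈ nbrs x),
      sval (update ω x₀ v x) * sval (update ω x₀ v y))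
    (v := fun x => ∑ y ∈ Λ.filter (fun y => y ∈ nbrs x), sval (ω x) * sval (ω y))
    fun x _ hx => by
      by_contra hmem
      simp only [Finset.mem_insert, not_or] at hmem
      refine hx (Finset.sum_congr rfl fun y hy => ?_)
      have hy : y ≠ x₀ := by
        rintro rfl
        exact hmem.2 (mem_nbrs_comm.mp (Finset.mem_filter.mp hy).2)
      rw [update_of_ne hmem.1, update_of_ne hy]
  simp only [pairSum]
  linarith

lemma isingWeight_update_le (β h : ℝ) (ω : Cfg2) :
    isingWeight β h Λ σ (update ω x₀ v)
      ≤ Real.exp (28 * |β| + 2 * |h|) * isingWeight β h Λ σ ω := by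
  rw [isingWeight_eq, isingWeight_eq, ← Real.exp_add, Real.exp_le_exp]
  have hP := abs_pairSum_update_sub_le Λ x₀ v ω
  have hB := abs_boundarySum_update_sub_le Λ σ x₀ v ω
  have hS := abs_spinSum_update_sub_le Λ x₀ v ω
  have hβ : β * ((pairSum Λ (update ω x₀ v) - pairSum Λ ω) / 2
      + (boundarySum Λ σ (update ω x₀ v) - boundarySum Λ σ ω)) ≤ |β| * 28 := by
    refine (le_abs_self _).trans ?_
    rw [abs_mul]
    gcongr
    refine (abs_add_le _ _).trans ?_
    rw [abs_div, abs_two]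
    linarith
  have hh : -(h * (spinSum Λ (update ω x₀ v) - spinSum Λ ω)) ≤ |h| * 2 := by
    refine (neg_le_abs _).trans ?_
    rw [abs_mul]
    gcongr
  linarith

end IsingEnergy

section FiniteVolume

variable (β h : ℝ) (Λ : Finset (ℤ × ℤ)) (σ : Cfg2)

lemma isingWeight_pos (ω : Cfg2) : 0 < isingWeight β h Λ σ ω := Real.exp_pos _

lemma fill_mono : Monotone (fill Λ σ) := fun τ₁ τ₂ hτ x => by
  unfold fill
  split_ifs
  exacts [hτ _, le_rfl]

lemma fill_inf (τ₁ τ₂ : Λ → Bool) : fill Λ σ (τ₁ ⊓ τ₂) = fill Λ σ τ₁ ⊓ fill Λ σ τ₂ := by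
  funext x
  by_cases hx : x ∈ Λ <;> simp [fill, hx]

lemma fill_sup (τ₁ τ₂ : Λ → Bool) : fill Λ σ (τ₁ ⊔ τ₂) = fill Λ σ τ₁ ⊔ fill Λ σ τ₂ := by
  funext x
  by_cases hx : x ∈ Λ <;> simp [fill, hx]

lemma fill_update (τ : Λ → Bool) (i : Λ) (b : Bool) :
    fill Λ σ (update τ i b) = update (fill Λ σ τ) i b := by
  funext x
  by_cases hx : x ∈ Λ
  · by_cases hxi : x = i
    · subst hxi; simp [fill]
    · have hxi' : (⟨x, hx⟩ : Λ) ≠ i := fun h => hxi (congrArg Subtype.val h)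
      simp [fill, hx, update_of_ne hxi, update_of_ne hxi']
  · simp [fill, hx, update_of_ne (fun h : x = i => hx (h ▸ i.2))]

lemma fill_apply_coe (τ : Λ → Bool) (i : Λ) : fill Λ σ τ i = τ i := by simp [fill]

noncomputable def isingZ (E : Set Cfg2) : ℝ :=
  ∑ τ : Λ → Bool, E.indicator (isingWeight β h Λ σ) (fill Λ σ τ)

lemma isingZ_nonneg (E : Set Cfg2) : 0 ≤ isingZ β h Λ σ E :=
  Finset.sum_nonneg fun _ _ => Set.indicator_nonneg (fun ω _ => (isingWeight_pos β h Λ σ ω).le) _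

lemma isingZ_univ_pos : 0 < isingZ β h Λ σ Set.univ := by
  simp only [isingZ, Set.indicator_univ]
  exact Finset.sum_pos (fun τ _ => isingWeight_pos β h Λ σ (fill Λ σ τ)) Finset.univ_nonempty

lemma isingFV_real_apply (E : Set Cfg2) :
    (isingFV β h Λ σ).real E = isingZ β h Λ σ E / isingZ β h Λ σ Set.univ := by
  have hterm : ∀ τ, ENNReal.ofReal (isingWeight β h Λ σ (fill Λ σ τ)) * E.indicator 1 (fill Λ σ τ)
      = ENNReal.ofReal (E.indicator (isingWeight β h Λ σ) (fill Λ σ τ)) := fun τ => by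
    by_cases hτ : fill Λ σ τ ∈ E <;> simp [hτ]
  have happly : isingFV β h Λ σ E
      = (ENNReal.ofReal (isingZ β h Λ σ Set.univ))⁻¹ * ENNReal.ofReal (isingZ β h Λ σ E) := by
    simp only [isingFV, Measure.smul_apply, Measure.coe_finsetSum, Finset.sum_apply,
      Measure.dirac_apply, smul_eq_mul, hterm, isingZ, Set.indicator_univ]
    rw [ENNReal.ofReal_sum_of_nonneg fun τ _ => (isingWeight_pos β h Λ σ (fill Λ σ τ)).le,
      ENNReal.ofReal_sum_of_nonneg fun _ _ =>
        Set.indicator_nonneg (fun ω _ => (isingWeight_pos β h Λ σ ω).le) _]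
  rw [measureReal_def, happly, ENNReal.toReal_mul, ENNReal.toReal_inv,
    ENNReal.toReal_ofReal (isingZ_univ_pos β h Λ σ).le,
    ENNReal.toReal_ofReal (isingZ_nonneg β h Λ σ E), div_eq_inv_mul]

instance isProbabilityMeasure_isingFV : IsProbabilityMeasure (isingFV β h Λ σ) := by
  constructor
  have := isingFV_real_apply β h Λ σ Set.univ
  rw [div_self (isingZ_univ_pos β h Λ σ).ne', measureReal_def] at this
  exact (ENNReal.toReal_eq_one_iff _).mp this

end FiniteVolume

section FiniteVolumeFKG

variable {β : ℝ} (h : ℝ) (Λ : Finset (ℤ × ℤ)) (σ : Cfg2)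

lemma isingZ_fkg (hβ : 0 ≤ β) (s : Finset (ℤ × ℤ)) (f : Cfg2) (p q : ℤ × ℤ) :
    isingZ β h Λ σ (cyl s f ∩ {η | η p = true}) * isingZ β h Λ σ (cyl s f ∩ {η | η q = true})
      ≤ isingZ β h Λ σ (cyl s f)
        * isingZ β h Λ σ (cyl s f ∩ {η | η p = true} ∩ {η | η q = true}) := by
  set w := isingWeight β h Λ σ
  have hw : ∀ ω, 0 ≤ w ω := fun ω => (isingWeight_pos β h Λ σ ω).le
  have hind : ∀ (E : Set Cfg2) (r : ℤ × ℤ) (ω : Cfg2),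
      E.indicator w ω * (if ω r = true then 1 else 0) = (E ∩ {η | η r = true}).indicator w ω :=
    fun E r ω => by by_cases hE : ω ∈ E <;> by_cases hr : ω r = true <;> simp [hE, hr]
  have hup : ∀ r, Monotone fun τ => if fill Λ σ τ r = true then (1 : ℝ) else 0 :=
    fun r τ₁ τ₂ hτ => by
      have := fill_mono Λ σ hτ r
      dsimp only
      revert this
      cases fill Λ σ τ₁ r <;> cases fill Λ σ τ₂ r <;> simp
  have hlat : ∀ τ₁ τ₂ : Λ → Bool,
      (cyl s f).indicator w (fill Λ σ τ₁) * (cyl s f).indicator w (fill Λ σ τ₂)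
        ≤ (cyl s f).indicator w (fill Λ σ (τ₁ ⊓ τ₂))
          * (cyl s f).indicator w (fill Λ σ (τ₁ ⊔ τ₂)) := fun τ₁ τ₂ => by
    by_cases h₁ : fill Λ σ τ₁ ∈ cyl s f
    · by_cases h₂ : fill Λ σ τ₂ ∈ cyl s f
      · rw [fill_inf, fill_sup, Set.indicator_of_mem h₁, Set.indicator_of_mem h₂,
          Set.indicator_of_mem (inf_mem_cyl h₁ h₂), Set.indicator_of_mem (sup_mem_cyl h₁ h₂)]
        exact isingWeight_mul_le Λ σ hβ h _ _
      · rw [Set.indicator_of_notMem h₂, mul_zero]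
        exact mul_nonneg (Set.indicator_nonneg (fun ω _ => hw ω) _)
          (Set.indicator_nonneg (fun ω _ => hw ω) _)
    · rw [Set.indicator_of_notMem h₁, zero_mul]
      exact mul_nonneg (Set.indicator_nonneg (fun ω _ => hw ω) _)
        (Set.indicator_nonneg (fun ω _ => hw ω) _)
  have := fkg (μ := fun τ => (cyl s f).indicator w (fill Λ σ τ)) (f := _) (g := _)
    (fun τ => Set.indicator_nonneg (fun ω _ => hw ω) _)
    (fun τ => by positivity) (fun τ => by positivity) (hup p) (hup q) hlat
  simpa only [isingZ, ← mul_assoc, hind] using this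

lemma cylFKG_isingFV (hβ : 0 ≤ β) : CylFKG (isingFV β h Λ σ) := fun s f p q _ _ _ => by
  simp only [isingFV_real_apply, div_mul_div_comm]
  exact div_le_div_of_nonneg_right (isingZ_fkg h Λ σ hβ s f p q)
    (mul_nonneg (isingZ_nonneg β h Λ σ _) (isingZ_nonneg β h Λ σ _))

end FiniteVolumeFKG

section FiniteVolumePositivity

variable (β h : ℝ) (Λ : Finset (ℤ × ℤ)) (σ : Cfg2)

lemma isingZ_inter_not_le {x₀ : ℤ × ℤ} (hx₀ : x₀ ∈ Λ) {s : Finset (ℤ × ℤ)} (hs : x₀ ∉ s)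
    (f : Cfg2) (v : Bool) :
    isingZ β h Λ σ (cyl s f ∩ {η | η x₀ = !v})
      ≤ Real.exp (28 * |β| + 2 * |h|) * isingZ β h Λ σ (cyl s f ∩ {η | η x₀ = v}) := by
  let i : Λ := ⟨x₀, hx₀⟩
  let flip : (Λ → Bool) → Λ → Bool := fun τ => update τ i (!τ i)
  have hflip : Involutive flip := fun τ => by simp [flip]
  rw [isingZ, ← Equiv.sum_comp (hflip.toPerm flip), isingZ, Finset.mul_sum]
  refine Finset.sum_le_sum fun τ _ => ?_
  simp only [Involutive.coe_toPerm, flip, fill_update]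
  by_cases hmem : fill Λ σ τ ∈ cyl s f ∩ {η | η x₀ = v}
  · rw [Set.indicator_of_mem hmem]
    exact (Set.indicator_le_self' (fun ω _ => (isingWeight_pos β h Λ σ ω).le) _).trans
      (isingWeight_update_le Λ σ x₀ _ β h _)
  · rw [Set.indicator_of_notMem hmem, mul_zero, Set.indicator_of_notMem]
    rintro ⟨hcyl, hx⟩
    refine hmem ⟨(update_mem_cyl_iff hs f _ _).mp hcyl, ?_⟩
    simpa [i, ← fill_apply_coe Λ σ τ i] using hx

lemma pow_le_isingFV_real_cyl {s : Finset (ℤ × ℤ)} (hs : s ⊆ Λ) (f : Cfg2) :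
    (1 + Real.exp (28 * |β| + 2 * |h|))⁻¹ ^ s.card ≤ (isingFV β h Λ σ).real (cyl s f) := by
  simpa using pow_mul_measureReal_univ_le_cyl (ν := isingFV β h Λ σ) (Real.exp_pos _).le
    (fun t g j hj hjt v => by
      simp only [isingFV_real_apply, ← mul_div_assoc]
      exact div_le_div_of_nonneg_right (isingZ_inter_not_le β h Λ σ hj hjt g v)
        (isingZ_univ_pos β h Λ σ).le) hs f

end FiniteVolumePositivity

section PlusPhase

variable {β h : ℝ} {μ : Measure Cfg2}

lemma eventually_subset_box (s : Finset (ℤ × ℤ)) : ∀ᶠ n in atTop, s ⊆ box n := by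
  refine eventually_atTop.2 ⟨s.sup fun x => x.1.natAbs ⊔ x.2.natAbs, fun n hn x hx => ?_⟩
  have := (Finset.le_sup (f := fun x : ℤ × ℤ => x.1.natAbs ⊔ x.2.natAbs) hx).trans hn
  simp only [sup_le_iff] at this
  simp only [box, Finset.mem_product, Finset.mem_Icc]
  omega

lemma IsPlusPhase.cylFKG (hβ : 0 ≤ β) (hμ : IsPlusPhase β h μ) : CylFKG μ :=
  haveI := hμ.1
  CylFKG.of_cylTendsto hμ.2 fun _ => cylFKG_isingFV h _ _ hβ

lemma IsPlusPhase.cylPositive (hμ : IsPlusPhase β h μ) : CylPositive μ :=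
  haveI := hμ.1
  CylPositive.of_cylTendsto hμ.2 fun s f => ⟨_, by positivity,
    (eventually_subset_box s).mono fun _ hn => pow_le_isingFV_real_cyl β h _ _ hn f⟩

lemma IsPlusPhase.cylPositive_schonmann (hμ : IsPlusPhase β h μ) :
    CylPositive (schonmann μ) :=
  hμ.cylPositive.map_comp (Prod.mk_left_injective 0)

lemma IsPlusPhase.cylFKG_schonmann (hβ : 0 ≤ β) (hμ : IsPlusPhase β h μ) :
    CylFKG (schonmann μ) :=
  (hμ.cylFKG hβ).map_comp (Prod.mk_left_injective 0)

lemma IsPlusPhase.isProbabilityMeasure_schonmann (hμ : IsPlusPhase β h μ) :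
    IsProbabilityMeasure (schonmann μ) :=
  haveI := hμ.1
  Measure.isProbabilityMeasure_map measurable_comp_right.aemeasurable

end PlusPhase

section PastEvents

variable (n l : ℕ) (b : Bool) (ω : Past Bool)

noncomputable def pastWindow : Finset ℤ := Finset.Icc (-((n : ℤ) + l)) (-1)

def pastFun : ℤ → Bool := fun i => if -(n : ℤ) ≤ i then ω (i.natAbs - 1) else b

lemma pastEvt_eq_cyl : pastEvt n l b ω = cyl (pastWindow n l) (pastFun n b ω) := by
  ext η
  simp only [pastEvt, cyl, pastWindow, pastFun, Finset.mem_Icc, Set.mem_ofPred_eq]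
  constructor
  · rintro ⟨hω, hb⟩ i ⟨hl, hr⟩
    split_ifs with hi
    exacts [hω i hi hr, hb i hl (by omega)]
  · intro hη
    refine ⟨fun i hl hr => ?_, fun i hl hr => ?_⟩
    · simpa [hl] using hη i ⟨by omega, hr⟩
    · simpa [show ¬-(n : ℤ) ≤ i by omega] using hη i ⟨hl, by omega⟩

lemma pastFun_of_lt {i : ℤ} (hi : i < -(n : ℤ)) : pastFun n b ω i = b := by
  simp [pastFun, not_le.mpr hi]

lemma zero_notMem_pastWindow : (0 : ℤ) ∉ pastWindow n l := by simp [pastWindow]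

lemma pastEvt_succ :
    pastEvt n (l + 1) b ω = pastEvt n l b ω ∩ {η | η (-((n : ℤ) + l + 1)) = b} := by
  have hwin : pastWindow n (l + 1) = insert (-((n : ℤ) + l + 1)) (pastWindow n l) := by
    ext i
    simp only [pastWindow, Finset.mem_insert, Finset.mem_Icc]
    push_cast
    omega
  rw [pastEvt_eq_cyl, pastEvt_eq_cyl, hwin, cyl_insert, pastFun_of_lt n b ω (by omega)]

lemma pastWindow_succ_left : pastWindow (n + 1) l = pastWindow n (l + 1) := by
  simp only [pastWindow]
  push_cast
  ring_nf

lemma pastFun_succ_of_ne {i : ℤ} (hi : i ≠ -((n : ℤ) + 1)) :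
    pastFun (n + 1) b ω i = pastFun n b ω i := by
  have hiff : -((n + 1 : ℕ) : ℤ) ≤ i ↔ -(n : ℤ) ≤ i := by
    push_cast
    omega
  simp only [pastFun, hiff]

lemma pastFun_le_pastFun {b b' : Bool} {ω ω' : Past Bool} (hb : b ≤ b') (hω : ω ≤ ω') (i : ℤ) :
    pastFun n b ω i ≤ pastFun n b' ω' i := by
  unfold pastFun
  split_ifs
  exacts [hω _, hb]

lemma dependsOn_pastEvt : DependsOn (fun ω => pastEvt n l b ω) (Finset.range n : Set ℕ) :=
  fun ω ω' h => by
    simp only [pastEvt_eq_cyl]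
    refine cyl_congr fun i hi => ?_
    simp only [pastFun]
    split_ifs with hni
    · simp only [pastWindow, Finset.mem_Icc] at hi
      exact h _ (by simp; omega)
    · rfl

end PastEvents

section FarPastConditioning

variable (ν : Measure (ZSeq Bool))

noncomputable def condSeq (b : Bool) (n l : ℕ) (ω : Past Bool) : ℝ :=
  condProbR ν {η | η 0 = b} (pastEvt n l b ω)

noncomputable def condLimit (b : Bool) (ω : Past Bool) : ℝ := ⨅ n, ⨆ l, condSeq ν b n l ω

/-- The g-function `P^{+,b}` of the paper. -/
noncomputable def condG (b a : Bool) (ω : Past Bool) : ℝ :=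
  if a = b then condLimit ν b ω else 1 - condLimit ν b ω

lemma measurable_condLimit (b : Bool) : Measurable (condLimit ν b) :=
  .iInf fun n => .iSup fun l => DependsOn.measurable (s := Finset.range n) fun ω ω' h => by
    simp only [condSeq, dependsOn_pastEvt n l b h]

variable {ν} [IsFiniteMeasure ν] (hpos : CylPositive ν) (hfkg : CylFKG ν)
include hpos hfkg

lemma condSeq_monotone (b : Bool) (n : ℕ) (ω : Past Bool) :
    Monotone fun l => condSeq ν b n l ω :=
  monotone_nat_of_le_succ fun l => by
    simp only [condSeq, pastEvt_succ, pastEvt_eq_cyl]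
    exact condProbR_le_inter_eq hpos hfkg (zero_notMem_pastWindow n l)
      (by simp [pastWindow]) (by omega) _ b

lemma condSeq_succ_le (b : Bool) (n l : ℕ) (ω : Past Bool) :
    condSeq ν b (n + 1) l ω ≤ condSeq ν b n (l + 1) ω := by
  simp only [condSeq, pastEvt_eq_cyl, pastWindow_succ_left]
  -- `b` is the value imposed at `-(n + 1)`, the only site where the two windows differ
  conv => enter [1, 2]; rw [← pastFun_of_lt n b ω (i := -((n : ℤ) + 1)) (by omega)]
  conv => enter [2, 2]; rw [← pastFun_of_lt n b ω (i := -((n : ℤ) + 1)) (by omega)]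
  exact condProbR_cyl_le_of_eq_of_ne hpos hfkg (zero_notMem_pastWindow n (l + 1))
    (by simp [pastWindow]) fun i _ hi => pastFun_succ_of_ne n b ω hi

lemma tendsto_condSeq (b : Bool) (ω : Past Bool) :
    (∀ n, Tendsto (fun l => condSeq ν b n l ω) atTop (𝓝 (⨆ l, condSeq ν b n l ω)))
      ∧ Tendsto (fun n => ⨆ l, condSeq ν b n l ω) atTop (𝓝 (condLimit ν b ω)) :=
  tendsto_iSup_and_tendsto_iInf_iSup (fun _ _ => condProbR_mem_Icc ν _ _)
    (fun n => condSeq_monotone hpos hfkg b n ω) fun n l => condSeq_succ_le hpos hfkg b n l ω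

lemma isCondG_condG (b : Bool) : IsCondG ν b (condG ν b) := by
  intro a ω
  obtain ⟨hl, hn⟩ := tendsto_condSeq hpos hfkg b ω
  by_cases hab : a = b
  · subst hab
    exact ⟨_, hl, by simpa [condG] using hn⟩
  · obtain rfl : a = !b := by cases a <;> cases b <;> simp_all
    refine ⟨fun n => 1 - ⨆ l, condSeq ν b n l ω, fun n => ?_, by simpa [condG] using hn.const_sub 1⟩
    have hne : ∀ l, ν (pastEvt n l b ω) ≠ 0 := fun l h0 =>
      (hpos (pastWindow n l) (pastFun n b ω)).ne' (by simp [measureReal_def, ← pastEvt_eq_cyl, h0])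
    simp only [setOf_eval_eq_not,
      condProbR_compl ν (hne _) (measurableSet_eval_eq (0 : ℤ) b)]
    exact (hl n).const_sub 1

lemma condLimit_mem_Icc (b : Bool) (ω : Past Bool) : condLimit ν b ω ∈ Set.Icc (0 : ℝ) 1 := by
  have hbdd : ∀ n, BddAbove (Set.range fun l => condSeq ν b n l ω) := fun n =>
    ⟨1, by rintro _ ⟨l, rfl⟩; exact (condProbR_mem_Icc ν _ _).2⟩
  exact isClosed_Icc.mem_of_tendsto (tendsto_condSeq hpos hfkg b ω).2 (.of_forall fun n =>
    ⟨le_ciSup_of_le (hbdd n) 0 (condProbR_mem_Icc ν _ _).1,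
      ciSup_le fun l => (condProbR_mem_Icc ν _ _).2⟩)

lemma isGFunction_condG (b : Bool) : IsGFunction (condG ν b) := by
  refine ⟨fun a => ?_, fun ω => ⟨?_, fun a => ?_⟩⟩
  · unfold condG
    split_ifs
    exacts [measurable_condLimit ν b, measurable_const.sub (measurable_condLimit ν b)]
  · cases b <;> simp [condG]
  · have := condLimit_mem_Icc hpos hfkg b ω
    unfold condG
    split_ifs
    exacts [this, ⟨by linarith [this.2], by linarith [this.1]⟩]

end FarPastConditioning

lemma IsCondG.le_of_condProbR_le {ν : Measure (ZSeq Bool)} {b b' : Bool}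
    {P P' : Bool → Past Bool → ℝ} (hP : IsCondG ν b P) (hP' : IsCondG ν b' P') {a : Bool}
    {ω ω' : Past Bool}
    (h : ∀ n l, condProbR ν {η | η 0 = a} (pastEvt n l b ω)
      ≤ condProbR ν {η | η 0 = a} (pastEvt n l b' ω')) : P a ω ≤ P' a ω' := by
  obtain ⟨L, hL, hlim⟩ := hP a ω
  obtain ⟨L', hL', hlim'⟩ := hP' a ω'
  exact le_of_tendsto_of_tendsto' hlim hlim' fun n =>
    le_of_tendsto_of_tendsto' (hL n) (hL' n) (h n)

lemma condProbR_pastEvt_mono {ν : Measure (ZSeq Bool)} [IsFiniteMeasure ν]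
    (hpos : CylPositive ν) (hfkg : CylFKG ν) {b b' : Bool} {ω ω' : Past Bool} (hb : b ≤ b')
    (hω : ω ≤ ω') (n l : ℕ) :
    condProbR ν {η | η 0 = true} (pastEvt n l b ω)
      ≤ condProbR ν {η | η 0 = true} (pastEvt n l b' ω') := by
  rw [pastEvt_eq_cyl, pastEvt_eq_cyl]
  exact condProbR_cyl_mono hpos hfkg (zero_notMem_pastWindow n l)
    fun i _ => pastFun_le_pastFun n hb hω i

/-- For all `β > 0` and `h`, the double limits defining `P_{β,h}^{+,+}` and
`P_{β,h}^{+,-}` exist for every past and every symbol; they are attractive g-functions and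
satisfy `P^{+,-}(+1|·) ≤ P^{+,+}(+1|·)` pointwise. -/
theorem condG_exist_attractive_and_ordered
    (β h : ℝ) (hβ : 0 < β) (μp : Measure Cfg2) (hμp : IsPlusPhase β h μp) :
    ∃ Pp Pm : Bool → Past Bool → ℝ,
      IsCondG (schonmann μp) true Pp ∧ IsCondG (schonmann μp) false Pm ∧
      IsGFunction Pp ∧ IsGFunction Pm ∧
      Monotone (Pp true) ∧ Monotone (Pm true) ∧
      ∀ ω, Pm true ω ≤ Pp true ω := by
  have := hμp.isProbabilityMeasure_schonmann
  have hpos := hμp.cylPositive_schonmann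
  have hfkg := hμp.cylFKG_schonmann hβ.le
  have hcond := isCondG_condG hpos hfkg
  have hattr : ∀ b, Monotone (condG (schonmann μp) b true) := fun b _ _ hω =>
    (hcond b).le_of_condProbR_le (hcond b) (condProbR_pastEvt_mono hpos hfkg le_rfl hω)
  exact ⟨_, _, hcond true, hcond false, isGFunction_condG hpos hfkg true,
    isGFunction_condG hpos hfkg false, hattr true, hattr false, fun _ =>
      (hcond false).le_of_condProbR_le (hcond true)
        (condProbR_pastEvt_mono hpos hfkg (Bool.false_le true) le_rfl)⟩
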